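/- arXiv:2203.02274 — 2 statements merged into one kernel-verified Lean document; each statement's English description precedes it below -/
import Mathlib

section
/- The ring of dual numbers over Z/2Z is a commutative weakly tripotent ring that is neither the zero ring nor a tripotent ring of characteristic three: it is nontrivial, it is weakly tripotent, its characteristic is 2 (in particular not 3), and it is not tripotent. -/
instance : DecidableEq (DualNumber (ZMod 2)) :=
  fun a b => decidable_of_iff (a.fst = b.fst ∧ a.snd = b.snd)
    ⟨fun h => TrivSqZeroExt.ext h.1 h.2, fun h => ⟨by rw [h], by rw [h]⟩⟩

instance : Fintype (DualNumber (ZMod 2)) := instFintypeProd (ZMod 2) (ZMod 2)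

theorem dualNumber_zmod2_charP_two : CharP (DualNumber (ZMod 2)) 2 :=
  charP_of_injective_ringHom (f := TrivSqZeroExt.inlHom (ZMod 2) (ZMod 2))
    (fun a b h => by simpa using congrArg TrivSqZeroExt.fst h) 2

/-- The dual numbers over `ZMod 2` form a nontrivial commutative weakly tripotent ring of
characteristic two (in particular not three) which is not tripotent. -/
theorem dualNumber_zmod2_weakly_tripotent_not_char_three_tripotent :
    Nontrivial (DualNumber (ZMod 2)) ∧
    (∀ a : DualNumber (ZMod 2), a ^ 3 = a ∨ (1 + a) ^ 3 = 1 + a) ∧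
    ringChar (DualNumber (ZMod 2)) = 2 ∧
    ringChar (DualNumber (ZMod 2)) ≠ 3 ∧
    ¬ (∀ a : DualNumber (ZMod 2), a ^ 3 = a) := by
  have hchar : ringChar (DualNumber (ZMod 2)) = 2 :=
    @ringChar.eq _ _ 2 dualNumber_zmod2_charP_two
  exact ⟨inferInstance, by decide, hchar, by rw [hchar]; decide, by decide⟩
end

section
/- Every weakly tripotent ring is strongly invo-clean: if R is a (unital, associative) ring such that for every a in R, a^3 = a or (1+a)^3 = 1+a, then every element a of R can be written as a = v + r where v^2 = 1, r^2 = r, and v r = r v. -/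
/-- Every weakly tripotent ring is strongly invo-clean. -/
theorem weakly_tripotent_is_strongly_invo_clean (R : Type*) [Ring R]
    (h : ∀ a : R, a ^ 3 = a ∨ (1 + a) ^ 3 = 1 + a) :
    ∀ a : R, ∃ v r : R, a = v + r ∧ v ^ 2 = 1 ∧ r ^ 2 = r ∧ v * r = r * v := by
  intro a
  have key : a ^ 3 = a →
      ∃ v r : R, a = v + r ∧ v ^ 2 = 1 ∧ r ^ 2 = r ∧ v * r = r * v := by
    intro H
    exact ⟨a + a ^ 2 - 1, 1 - a ^ 2,
      by noncomm_ring,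
      by linear_combination (norm := noncomm_ring) (a + 2) * H,
      by linear_combination (norm := noncomm_ring) a * H,
      by noncomm_ring⟩
  rcases h a with H | H1
  · exact key H
  rcases h (-a) with H' | H2
  · exact key (by linear_combination (norm := noncomm_ring) -H')
  exact ⟨3 * a + 5 * a ^ 2 - 1, 1 - 2 * a - 5 * a ^ 2,
    by noncomm_ring,
    by linear_combination (norm := noncomm_ring) (18 * a - 10) * H1 + (-7 - 7 * a) * H2,
    by linear_combination (norm := noncomm_ring) (16 * a - 9) * H1 + (-8 - 9 * a) * H2,
    by noncomm_ring⟩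
end
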